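/- Define Z(τ) = (1/2)(θ₃(τ)⁴ + θ₄(τ)⁴). Then Z(-1/(2τ)) = -2τ² Z(τ) for all τ in the upper half plane. -/

import Mathlib

open Complex Real

/-- Jacobi theta function θ₃. -/
noncomputable def theta3 (τ : ℂ) : ℂ :=
  ∑' n : ℤ, Complex.exp ((Real.pi : ℂ) * I * (n : ℂ) ^ 2 * τ)

/-- Jacobi theta function θ₄. -/
noncomputable def theta4 (τ : ℂ) : ℂ :=
  ∑' n : ℤ, (-1 : ℂ) ^ n * Complex.exp ((Real.pi : ℂ) * I * (n : ℂ) ^ 2 * τ)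

/-- `Z(τ) = (1/2)(θ₃(τ)⁴ + θ₄(τ)⁴)`. -/
noncomputable def Zform (τ : ℂ) : ℂ := (1 / 2) * (theta3 τ ^ 4 + theta4 τ ^ 4)

noncomputable def theta2aux (τ : ℂ) : ℂ :=
  ∑' n : ℤ, Complex.exp ((Real.pi : ℂ) * I * ((n : ℂ) + 1/2) ^ 2 * τ)

lemma theta3_eq (τ : ℂ) : theta3 τ = jacobiTheta₂ 0 τ := by
  unfold theta3 jacobiTheta₂ jacobiTheta₂_term
  refine tsum_congr fun n => ?_
  ring_nf

lemma neg_one_zpow_eq_exp (n : ℤ) : (-1 : ℂ) ^ n = Complex.exp (2 * (π : ℂ) * I * n * (1/2)) := by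
  have : 2 * (π : ℂ) * I * n * (1/2) = n * (π * I) := by ring
  rw [this, Complex.exp_int_mul, Complex.exp_pi_mul_I]

lemma theta4_eq (τ : ℂ) : theta4 τ = jacobiTheta₂ (1/2) τ := by
  unfold theta4 jacobiTheta₂ jacobiTheta₂_term
  refine tsum_congr fun n => ?_
  rw [Complex.exp_add, neg_one_zpow_eq_exp]

-- summability lemmas
lemma summable_f {τ : ℂ} (hτ : 0 < τ.im) :
    Summable fun n : ℤ => ‖Complex.exp ((π : ℂ) * I * (n : ℂ) ^ 2 * τ)‖ := by
  have h := (summable_jacobiTheta₂_term_iff 0 τ).mpr hτ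
  rw [← summable_norm_iff] at h
  refine h.congr fun n => ?_
  unfold jacobiTheta₂_term
  congr 2
  ring_nf

lemma summable_g {τ : ℂ} (hτ : 0 < τ.im) :
    Summable fun n : ℤ => ‖(-1 : ℂ) ^ n * Complex.exp ((π : ℂ) * I * (n : ℂ) ^ 2 * τ)‖ := by
  refine (summable_f hτ).congr fun n => ?_
  rw [norm_mul]
  have : ‖(-1 : ℂ) ^ n‖ = 1 := by
    rw [norm_zpow]
    simp
  rw [this, one_mul]

lemma summable_h {τ : ℂ} (hτ : 0 < τ.im) :
    Summable fun n : ℤ => ‖Complex.exp ((π : ℂ) * I * ((n : ℂ) + 1/2) ^ 2 * τ)‖ := by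
  have h := (summable_jacobiTheta₂_term_iff (τ/2) τ).mpr hτ
  rw [← summable_norm_iff] at h
  have h2 := h.mul_left ‖Complex.exp ((π : ℂ) * I * (1/4 : ℂ) * τ)‖
  refine h2.congr fun n => ?_
  rw [← norm_mul]
  unfold jacobiTheta₂_term
  rw [← Complex.exp_add]
  congr 2
  ring

lemma im_two_mul {τ : ℂ} (hτ : 0 < τ.im) : 0 < ((2:ℂ) * τ).im := by
  have : ((2:ℂ) * τ).im = 2 * τ.im := by simp [Complex.mul_im]
  rw [this]; linarith

lemma double_add {τ : ℂ} (hτ : 0 < τ.im) :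
    theta3 τ ^ 2 + theta4 τ ^ 2 = 2 * theta3 (2 * τ) ^ 2 := by
  set f : ℤ → ℂ := fun n => Complex.exp ((π : ℂ) * I * (n : ℂ) ^ 2 * τ) with hf_def
  set g : ℤ → ℂ := fun n => (-1 : ℂ) ^ n * Complex.exp ((π : ℂ) * I * (n : ℂ) ^ 2 * τ) with hg_def
  have hf := summable_f hτ
  have hg := summable_g hτ
  have h1 : theta3 τ ^ 2 = ∑' p : ℤ × ℤ, f p.1 * f p.2 := by
    rw [sq, theta3]; exact tsum_mul_tsum_of_summable_norm hf hf
  have h2 : theta4 τ ^ 2 = ∑' p : ℤ × ℤ, g p.1 * g p.2 := by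
    rw [sq, theta4]; exact tsum_mul_tsum_of_summable_norm hg hg
  have hsf : Summable fun p : ℤ × ℤ => f p.1 * f p.2 := (hf.mul_norm hf).of_norm
  have hsg : Summable fun p : ℤ × ℤ => g p.1 * g p.2 := (hg.mul_norm hg).of_norm
  rw [h1, h2, ← Summable.tsum_add hsf hsg]
  have key : ∀ p : ℤ × ℤ, f p.1 * f p.2 + g p.1 * g p.2
      = (1 + (-1 : ℂ) ^ (p.1 + p.2)) * (f p.1 * f p.2) := by
    intro p
    rw [zpow_add₀ (by norm_num : (-1:ℂ) ≠ 0)]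
    simp only [hg_def]
    ring
  simp_rw [key]
  -- reindex
  set F : ℤ × ℤ → ℂ := fun p => (1 + (-1 : ℂ) ^ (p.1 + p.2)) * (f p.1 * f p.2) with hF_def
  have hemb : Function.Injective (fun q : ℤ × ℤ => (q.1 + q.2, q.1 - q.2)) := by
    intro a b h
    simp only [Prod.mk.injEq, Prod.ext_iff] at h ⊢
    omega
  have hsupp : Function.support F ⊆ Set.range (fun q : ℤ × ℤ => (q.1 + q.2, q.1 - q.2)) := by
    intro p hp
    by_cases h : Even (p.1 + p.2)
    · obtain ⟨a, b, ha, hb⟩ : ∃ a b : ℤ, p.1 = a + b ∧ p.2 = a - b := by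
        obtain ⟨k, hk⟩ := h
        exact ⟨k, p.1 - k, by omega, by omega⟩
      exact ⟨(a, b), by simp [← ha, ← hb]⟩
    · exfalso
      apply hp
      rw [Int.not_even_iff_odd] at h
      simp only [hF_def, h.neg_one_zpow]
      ring
  rw [← hemb.tsum_eq hsupp]
  have h3 : theta3 (2 * τ) ^ 2 = ∑' p : ℤ × ℤ,
      Complex.exp ((π : ℂ) * I * (p.1 : ℂ) ^ 2 * (2*τ)) *
      Complex.exp ((π : ℂ) * I * (p.2 : ℂ) ^ 2 * (2*τ)) := by
    rw [sq, theta3]; exact tsum_mul_tsum_of_summable_norm (summable_f (im_two_mul hτ)) (summable_f (im_two_mul hτ))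
  rw [h3, ← tsum_mul_left]
  refine tsum_congr fun q => ?_
  simp only [hF_def, hf_def]
  have heven : (-1 : ℂ) ^ (q.1 + q.2 + (q.1 - q.2)) = 1 := by
    have : Even (q.1 + q.2 + (q.1 - q.2)) := ⟨q.1, by ring⟩
    exact this.neg_one_zpow
  rw [heven, ← Complex.exp_add, ← Complex.exp_add]
  have harg : (π : ℂ) * I * ((q.1 + q.2 : ℤ) : ℂ) ^ 2 * τ + (π : ℂ) * I * ((q.1 - q.2 : ℤ) : ℂ) ^ 2 * τ
      = (π : ℂ) * I * (q.1 : ℂ) ^ 2 * (2 * τ) + (π : ℂ) * I * (q.2 : ℂ) ^ 2 * (2 * τ) := by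
    push_cast
    ring
  rw [harg]
  ring

lemma double_sub {τ : ℂ} (hτ : 0 < τ.im) :
    theta3 τ ^ 2 - theta4 τ ^ 2 = 2 * theta2aux (2 * τ) ^ 2 := by
  set f : ℤ → ℂ := fun n => Complex.exp ((π : ℂ) * I * (n : ℂ) ^ 2 * τ) with hf_def
  set g : ℤ → ℂ := fun n => (-1 : ℂ) ^ n * Complex.exp ((π : ℂ) * I * (n : ℂ) ^ 2 * τ) with hg_def
  have hf := summable_f hτ
  have hg := summable_g hτ
  have h1 : theta3 τ ^ 2 = ∑' p : ℤ × ℤ, f p.1 * f p.2 := by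
    rw [sq, theta3]; exact tsum_mul_tsum_of_summable_norm hf hf
  have h2 : theta4 τ ^ 2 = ∑' p : ℤ × ℤ, g p.1 * g p.2 := by
    rw [sq, theta4]; exact tsum_mul_tsum_of_summable_norm hg hg
  have hsf : Summable fun p : ℤ × ℤ => f p.1 * f p.2 := (hf.mul_norm hf).of_norm
  have hsg : Summable fun p : ℤ × ℤ => g p.1 * g p.2 := (hg.mul_norm hg).of_norm
  rw [h1, h2, ← Summable.tsum_sub hsf hsg]
  have key : ∀ p : ℤ × ℤ, f p.1 * f p.2 - g p.1 * g p.2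
      = (1 - (-1 : ℂ) ^ (p.1 + p.2)) * (f p.1 * f p.2) := by
    intro p
    rw [zpow_add₀ (by norm_num : (-1:ℂ) ≠ 0)]
    simp only [hg_def]
    ring
  simp_rw [key]
  set F : ℤ × ℤ → ℂ := fun p => (1 - (-1 : ℂ) ^ (p.1 + p.2)) * (f p.1 * f p.2) with hF_def
  have hemb : Function.Injective (fun q : ℤ × ℤ => (q.1 + q.2 + 1, q.1 - q.2)) := by
    intro a b h
    simp only [Prod.mk.injEq, Prod.ext_iff] at h ⊢
    omega
  have hsupp : Function.support F ⊆ Set.range (fun q : ℤ × ℤ => (q.1 + q.2 + 1, q.1 - q.2)) := by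
    intro p hp
    by_cases h : Odd (p.1 + p.2)
    · obtain ⟨a, b, ha, hb⟩ : ∃ a b : ℤ, p.1 = a + b + 1 ∧ p.2 = a - b := by
        obtain ⟨k, hk⟩ := h
        exact ⟨k, p.1 - k - 1, by omega, by omega⟩
      exact ⟨(a, b), by simp [← ha, ← hb]⟩
    · exfalso
      apply hp
      rw [Int.not_odd_iff_even] at h
      simp only [hF_def, h.neg_one_zpow]
      ring
  rw [← hemb.tsum_eq hsupp]
  have h3 : theta2aux (2 * τ) ^ 2 = ∑' p : ℤ × ℤ,
      Complex.exp ((π : ℂ) * I * ((p.1 : ℂ) + 1/2) ^ 2 * (2*τ)) *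
      Complex.exp ((π : ℂ) * I * ((p.2 : ℂ) + 1/2) ^ 2 * (2*τ)) := by
    rw [sq, theta2aux]; exact tsum_mul_tsum_of_summable_norm (summable_h (im_two_mul hτ)) (summable_h (im_two_mul hτ))
  rw [h3, ← tsum_mul_left]
  refine tsum_congr fun q => ?_
  simp only [hF_def, hf_def]
  have hodd : (-1 : ℂ) ^ (q.1 + q.2 + 1 + (q.1 - q.2)) = -1 := by
    have : Odd (q.1 + q.2 + 1 + (q.1 - q.2)) := ⟨q.1, by ring⟩
    exact this.neg_one_zpow
  rw [hodd, ← Complex.exp_add, ← Complex.exp_add]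
  have harg : (π : ℂ) * I * ((q.1 + q.2 + 1 : ℤ) : ℂ) ^ 2 * τ + (π : ℂ) * I * ((q.1 - q.2 : ℤ) : ℂ) ^ 2 * τ
      = (π : ℂ) * I * ((q.1 : ℂ) + 1/2) ^ 2 * (2 * τ) + (π : ℂ) * I * ((q.2 : ℂ) + 1/2) ^ 2 * (2 * τ) := by
    push_cast
    ring
  rw [harg]
  ring

lemma fricke_core {τ : ℂ} (hτ : 0 < τ.im) :
    theta3 (-1 / (2 * τ)) ^ 4 = -4 * τ ^ 2 * theta3 (2 * τ) ^ 4 ∧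
    theta4 (-1 / (2 * τ)) ^ 4 = -4 * τ ^ 2 * theta2aux (2 * τ) ^ 4 := by
  have hne : τ ≠ 0 := fun h => by simp [h] at hτ
  set σ : ℂ := -1 / (2 * τ) with hσ
  have hσne : σ ≠ 0 := by
    simp only [hσ]
    intro h
    rw [div_eq_zero_iff] at h
    rcases h with h | h
    · norm_num at h
    · exact hne (by simpa using h)
  have hinv : -1 / σ = 2 * τ := by
    rw [hσ]; field_simp
  set w : ℂ := -I * σ with hw_def
  have hw : w ≠ 0 := mul_ne_zero (by simp [I_ne_zero]) hσne
  set c : ℂ := w ^ (1/2 : ℂ) with hc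
  have hc2 : c ^ 2 = w := by
    rw [sq, hc, ← Complex.cpow_add _ _ hw]
    norm_num
  have hσ2 : σ ^ 2 = 1 / (4 * τ ^ 2) := by
    rw [hσ]; field_simp; ring
  have hw2 : w ^ 2 = -(1 / (4 * τ ^ 2)) := by
    rw [hw_def, mul_pow, hσ2, neg_pow_two, I_sq]; ring
  have hcne : c ≠ 0 := by
    intro h
    rw [h] at hc2
    simp only [ne_eq] at hw
    exact hw (by rw [← hc2]; ring)
  have hc4 : (1 / c) ^ 4 = -4 * τ ^ 2 := by
    have h4 : c ^ 4 = w ^ 2 := by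
      rw [show (4:ℕ) = 2*2 by norm_num, pow_mul, hc2]
    rw [div_pow, one_pow, h4, hw2]
    field_simp
  constructor
  · have h1 : theta3 σ = 1 / c * theta3 (2 * τ) := by
      rw [theta3_eq, theta3_eq, jacobiTheta₂_functional_equation 0 σ, hinv]
      have h0 : -(π:ℂ) * I * 0 ^ 2 / σ = 0 := by ring
      rw [h0, Complex.exp_zero, mul_one, zero_div]
    rw [h1, mul_pow, hc4]
  · have hzdiv : (1/2 : ℂ) / σ = -τ := by
      rw [hσ]; field_simp
    have hE : Complex.exp (-(π:ℂ) * I * (1/2)^2 / σ) * jacobiTheta₂ (-τ) (2 * τ)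
        = theta2aux (2 * τ) := by
      have hEval : -(π:ℂ) * I * (1/2)^2 / σ = (π:ℂ) * I * τ / 2 := by
        rw [hσ]; field_simp
      rw [hEval, theta2aux, ← (Equiv.neg ℤ).tsum_eq, jacobiTheta₂, ← tsum_mul_left]
      refine tsum_congr fun n => ?_
      rw [jacobiTheta₂_term, ← Complex.exp_add]
      congr 1
      simp only [Equiv.neg_apply]
      push_cast
      ring
    have h1 : theta4 σ = 1 / c * theta2aux (2 * τ) := by
      rw [theta4_eq, jacobiTheta₂_functional_equation (1/2) σ, hinv, hzdiv, ← hE]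
      ring
    rw [h1, mul_pow, hc4]

/-- `Z(-1/(2τ)) = -2τ² Z(τ)`: the weight-2 form `Z` is an eigenfunction
of the Fricke involution `w₂` with eigenvalue `-1`. -/
theorem Zform_fricke (τ : ℂ) (hτ : 0 < τ.im) :
    Zform (-1 / (2 * τ)) = -2 * τ ^ 2 * Zform τ := by
  obtain ⟨h3, h4⟩ := fricke_core hτ
  have hadd := double_add hτ
  have hsub := double_sub hτ
  unfold Zform
  rw [h3, h4]
  have e3 : theta3 τ ^ 4 = (theta3 τ ^ 2) ^ 2 := by ring
  have e4 : theta4 τ ^ 4 = (theta4 τ ^ 2) ^ 2 := by ring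
  have e3' : theta3 (2*τ) ^ 4 = (theta3 (2*τ) ^ 2) ^ 2 := by ring
  have e2' : theta2aux (2*τ) ^ 4 = (theta2aux (2*τ) ^ 2) ^ 2 := by ring
  rw [e3, e4, e3', e2']
  linear_combination (τ^2/2) * (theta3 τ^2 + theta4 τ^2 + 2*theta3 (2*τ)^2) * hadd
    + (τ^2/2) * (theta3 τ^2 - theta4 τ^2 + 2*theta2aux (2*τ)^2) * hsub
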